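/- arXiv:2005.09847 — 6 statements merged into one kernel-verified Lean document; each statement's English description precedes it below -/
import Mathlib

section
/- Let Γₙ be the graph on {v₀,…,vₙ, w₀,…,wₙ} with edges: all pairs among the vⱼ, and wᵢ adjacent to vⱼ iff j ≠ i. Define z_r(Γₙ) as the maximum of Σ_{i=1}^r |Cᵢ| over cliques C₁,…,C_r of Γₙ with empty common intersection ∩_{i=1}^r Cᵢ = ∅. Then for 2 ≤ r ≤ n, z_r(Γₙ) = (r−1)(n+1) + r. -/
/-- The vertex set of the graph `Γₙ`: vertices `v₀, …, vₙ` (left) and `w₀, …, wₙ` (right). -/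
def GammaVert (n : ℕ) : Type := Fin (n + 1) ⊕ Fin (n + 1)

/-- The graph `Γₙ`: all pairs among the `vⱼ` are adjacent, and `wᵢ` is adjacent to `vⱼ`
iff `i ≠ j`; no two `w`'s are adjacent. -/
def Gamma (n : ℕ) : SimpleGraph (GammaVert n) :=
  SimpleGraph.fromRel fun a b =>
    match a, b with
    | Sum.inl _, Sum.inl _ => True
    | Sum.inl j, Sum.inr i => i ≠ j
    | Sum.inr i, Sum.inl j => i ≠ j
    | Sum.inr _, Sum.inr _ => False

instance (n : ℕ) : Fintype (GammaVert n) := by unfold GammaVert; infer_instance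
instance (n : ℕ) : DecidableEq (GammaVert n) := by unfold GammaVert; infer_instance

/-- The set of total sizes `∑ i, |Cᵢ|` over all `r`-tuples of cliques `C₁, …, C_r` of `Γₙ`
with empty common intersection. -/
def cliqueSums (n r : ℕ) : Set ℕ :=
  {s | ∃ C : Fin r → Finset (GammaVert n),
    (∀ i, (Gamma n).IsClique (C i : Set (GammaVert n))) ∧
    Finset.univ.inf C = ∅ ∧ s = ∑ i, (C i).card}

/-!
A clique of `Γₙ` contains at most one `wᵢ`, and every `vⱼ` is missed by one of the `r` cliques,
so `n + 1 + ∑ |Cᵢ| ≤ r (n + 1) + r`. Equality holds for the cliques `{wᵢ} ∪ {vⱼ : j ≠ i}`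
(`i < r - 1`) together with `{w_{r-1}} ∪ {vⱼ : j < r - 1}`: the `vⱼ` with `j < r - 1` are missed
by the `j`-th clique, the others by the last one, and the first and last cliques contain
different `w`'s.
-/

open Finset

theorem Finset.univ_inf_eq_empty_iff {ι α : Type*} [Fintype ι] [Fintype α] [DecidableEq α]
    {L : ι → Finset α} : univ.inf L = ∅ ↔ ∀ a, ∃ i, a ∉ L i := by
  simp [eq_empty_iff_forall_notMem, mem_inf]

theorem Finset.card_add_sum_card_le_of_forall_exists_notMem {ι α : Type*} [Fintype ι]
    [Fintype α] [DecidableEq α] (L : ι → Finset α) (h : ∀ a, ∃ i, a ∉ L i) :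
    Fintype.card α + ∑ i, #(L i) ≤ Fintype.card ι * Fintype.card α := by
  have hcover : univ ⊆ univ.biUnion fun i => (L i)ᶜ := fun a _ => by
    simpa only [mem_biUnion, mem_univ, mem_compl, true_and] using h a
  have hcompl : ∑ i, #(L i)ᶜ + ∑ i, #(L i) = Fintype.card ι * Fintype.card α := by
    simp only [← sum_add_distrib, card_compl_add_card, sum_const, card_univ, smul_eq_mul]
  calc Fintype.card α + ∑ i, #(L i)
      ≤ #(univ.biUnion fun i => (L i)ᶜ) + ∑ i, #(L i) := by
        gcongr; exact (card_le_card hcover).trans_eq' card_univ.symm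
    _ ≤ ∑ i, #(L i)ᶜ + ∑ i, #(L i) := by gcongr; exact card_biUnion_le
    _ = Fintype.card ι * Fintype.card α := hcompl

namespace SimpleGraph

variable {α β : Type*} {G : SimpleGraph (α ⊕ β)}

lemma IsClique.card_toRight_le_one (hβ : ∀ i k, ¬G.Adj (.inr i) (.inr k)) {C : Finset (α ⊕ β)}
    (hC : G.IsClique (C : Set (α ⊕ β))) : #C.toRight ≤ 1 :=
  card_le_one.2 fun i hi k hk => by_contra fun hik =>
    hβ i k (hC (mem_toRight.1 hi) (mem_toRight.1 hk) (by simpa using hik))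

theorem card_add_sum_card_le_of_isClique [Fintype α] [Fintype β] [DecidableEq α] [DecidableEq β]
    {ι : Type*} [Fintype ι] (hβ : ∀ i k, ¬G.Adj (.inr i) (.inr k)) (C : ι → Finset (α ⊕ β))
    (hC : ∀ i, G.IsClique (C i : Set (α ⊕ β))) (hinf : univ.inf C = ∅) :
    Fintype.card α + ∑ i, #(C i) ≤ Fintype.card ι * Fintype.card α + Fintype.card ι := by
  have hleft : Fintype.card α + ∑ i, #(C i).toLeft ≤ Fintype.card ι * Fintype.card α :=
    card_add_sum_card_le_of_forall_exists_notMem (fun i => (C i).toLeft)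
      fun a => by simpa using univ_inf_eq_empty_iff.1 hinf (.inl a)
  have hright : ∑ i, #(C i).toRight ≤ Fintype.card ι := by
    simpa using sum_le_sum fun i (_ : i ∈ univ) => (hC i).card_toRight_le_one hβ
  simp only [← card_toLeft_add_card_toRight, sum_add_distrib]
  omega

lemma isClique_insert_inr_map_inl [DecidableEq α] [DecidableEq β]
    (hvv : ∀ j k, j ≠ k → G.Adj (.inl j) (.inl k)) {a : β} {S : Finset α}
    (ha : ∀ j ∈ S, G.Adj (.inr a) (.inl j)) :
    G.IsClique ((insert (Sum.inr a) (S.map .inl) : Finset (α ⊕ β)) : Set (α ⊕ β)) := by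
  rw [coe_insert, isClique_insert, coe_map]
  refine ⟨?_, ?_⟩
  · rintro _ ⟨j, -, rfl⟩ _ ⟨k, -, rfl⟩ hjk
    exact hvv j k (by simpa using hjk)
  · rintro _ ⟨j, hj, rfl⟩ -
    exact ha j hj

end SimpleGraph

def extremalCliques (m k : ℕ) (hk : k < m) : Fin (k + 1) → Finset (Fin m ⊕ Fin m) :=
  Fin.lastCases (insert (.inr ⟨k, hk⟩) ((univ.filter fun j : Fin m => j.val < k).map .inl))
    fun i => insert (.inr (i.castLE hk.le)) ((univ.erase (i.castLE hk.le)).map .inl)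

section extremalCliques

variable {m k : ℕ} {hk : k < m}

lemma isClique_extremalCliques {G : SimpleGraph (Fin m ⊕ Fin m)}
    (hvv : ∀ j k, j ≠ k → G.Adj (.inl j) (.inl k)) (hvw : ∀ i j, i ≠ j → G.Adj (.inr i) (.inl j))
    (i : Fin (k + 1)) : G.IsClique (extremalCliques m k hk i : Set (Fin m ⊕ Fin m)) := by
  induction i using Fin.lastCases with
  | last =>
    simp only [extremalCliques, Fin.lastCases_last]
    refine SimpleGraph.isClique_insert_inr_map_inl hvv fun j hj => hvw _ _ ?_
    rintro rfl
    simp at hj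
  | cast i =>
    simp only [extremalCliques, Fin.lastCases_castSucc]
    exact SimpleGraph.isClique_insert_inr_map_inl hvv fun j hj => hvw _ _ (ne_of_mem_erase hj).symm

lemma sum_card_extremalCliques : ∑ i, #(extremalCliques m k hk i) = k * m + (k + 1) := by
  simp [Fin.sum_univ_castSucc, extremalCliques, Fin.card_filter_val_lt, min_eq_right hk.le,
    Nat.sub_add_cancel (Nat.one_le_of_lt hk)]

lemma inf_extremalCliques (hk₁ : 1 ≤ k) : univ.inf (extremalCliques m k hk) = ∅ := by
  refine univ_inf_eq_empty_iff.2 ?_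
  rintro (j | j)
  · by_cases hj : j.val < k
    · exact ⟨Fin.castSucc ⟨j, hj⟩, by simp only [extremalCliques, Fin.lastCases_castSucc]; simp⟩
    · exact ⟨Fin.last k, by simp [extremalCliques, hj]⟩
  · by_cases hj : j.val = k
    · exact ⟨Fin.castSucc ⟨0, hk₁⟩, by
        simp only [extremalCliques, Fin.lastCases_castSucc]; simp [Fin.ext_iff]; omega⟩
    · exact ⟨Fin.last k, by simp [extremalCliques, Fin.ext_iff, hj]⟩

end extremalCliques

namespace Gamma

variable {n : ℕ}

lemma adj_inl_inl {j k : Fin (n + 1)} (h : j ≠ k) : (Gamma n).Adj (.inl j) (.inl k) :=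
  (SimpleGraph.fromRel_adj _ _ _).2 ⟨Sum.inl_injective.ne h, .inl trivial⟩

lemma adj_inr_inl {i j : Fin (n + 1)} (h : i ≠ j) : (Gamma n).Adj (.inr i) (.inl j) :=
  (SimpleGraph.fromRel_adj _ _ _).2 ⟨Sum.inr_ne_inl, .inl h⟩

lemma not_adj_inr_inr (i k : Fin (n + 1)) : ¬(Gamma n).Adj (.inr i) (.inr k) := fun h =>
  ((SimpleGraph.fromRel_adj _ _ _).1 h).2.elim id id

end Gamma

theorem stmt_3_general (n r : ℕ) (hr : 2 ≤ r) (hrn : r ≤ n) :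
    IsGreatest (cliqueSums n r) ((r - 1) * (n + 1) + r) := by
  obtain ⟨k, rfl⟩ : ∃ k, r = k + 1 := ⟨r - 1, by omega⟩
  refine ⟨⟨extremalCliques (n + 1) k (by omega),
    isClique_extremalCliques (fun _ _ => Gamma.adj_inl_inl) (fun _ _ => Gamma.adj_inr_inl),
    inf_extremalCliques (by omega),
    by rw [Nat.add_sub_cancel]; exact sum_card_extremalCliques.symm⟩, ?_⟩
  rintro _ ⟨C, hC, hinf, rfl⟩
  have hbound : n + 1 + ∑ i, #(C i) ≤ (k + 1) * (n + 1) + (k + 1) := by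
    have := SimpleGraph.card_add_sum_card_le_of_isClique Gamma.not_adj_inr_inr C hC hinf
    rwa [Fintype.card_fin, Fintype.card_fin] at this
  rw [Nat.add_sub_cancel]
  linarith [add_one_mul k (n + 1)]

/-- For `2 ≤ r ≤ n`, the maximum `z_r(Γₙ)` of total sizes of `r` cliques with empty
common intersection equals `(r-1)(n+1) + r`. -/
theorem stmt_3 (n r : ℕ) (hn : 2 ≤ n) (hr : 2 ≤ r) (hrn : r ≤ n) :
    IsGreatest (cliqueSums n r) ((r - 1) * (n + 1) + r) :=
  stmt_3_general n r hr hrn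
end

section
/- For the graph Γₙ above and the sequence a_r = z_r(Γₙ), one has a_{n+1} − a_n > n+1 while a_{r+1} − a_r = n+1 for all r > n. In particular the difference sequence a_{r+1} − a_r is not constant but is eventually constant equal to the clique number n+1. -/
namespace Gamma

open Finset Function

variable {n : ℕ}

def v (i : Fin (n + 1)) : GammaVert n := Sum.inl i

def w (i : Fin (n + 1)) : GammaVert n := Sum.inr i

lemma v_injective : Injective (v (n := n)) := Sum.inl_injective

@[simp] lemma v_inj {i j : Fin (n + 1)} : v (n := n) i = v j ↔ i = j := v_injective.eq_iff

@[simp] lemma w_inj {i j : Fin (n + 1)} : w (n := n) i = w j ↔ i = j := Sum.inr_injective.eq_iff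

@[simp] lemma v_ne_w (i j : Fin (n + 1)) : v (n := n) i ≠ w j := Sum.inl_ne_inr

lemma eq_v_or_eq_w (x : GammaVert n) : (∃ i, x = v i) ∨ ∃ i, x = w i := by
  rcases x with i | i
  exacts [.inl ⟨i, rfl⟩, .inr ⟨i, rfl⟩]

@[simp] lemma adj_v_v {i j : Fin (n + 1)} : (Gamma n).Adj (v i) (v j) ↔ i ≠ j :=
  (SimpleGraph.fromRel_adj _ _ _).trans <| by
    change v i ≠ v j ∧ (True ∨ True) ↔ _
    simp

@[simp] lemma adj_v_w {i j : Fin (n + 1)} : (Gamma n).Adj (v j) (w i) ↔ i ≠ j :=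
  (SimpleGraph.fromRel_adj _ _ _).trans <| by
    change v j ≠ w i ∧ (i ≠ j ∨ i ≠ j) ↔ _
    simp

@[simp] lemma adj_w_v {i j : Fin (n + 1)} : (Gamma n).Adj (w i) (v j) ↔ i ≠ j := by
  rw [SimpleGraph.adj_comm, adj_v_w]

@[simp] lemma not_adj_w_w {i j : Fin (n + 1)} : ¬ (Gamma n).Adj (w i) (w j) := fun h =>
  (((SimpleGraph.fromRel_adj _ _ _).1 h).2 : False ∨ False).elim id id

variable (n) in
def leftClique : Finset (GammaVert n) := univ.map ⟨v, v_injective⟩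

variable (n) in
def starClique (i : Fin (n + 1)) : Finset (GammaVert n) :=
  cons (w i) ((univ.erase i).map ⟨v, v_injective⟩) (by simp)

@[simp] lemma v_mem_leftClique (i : Fin (n + 1)) : v i ∈ leftClique n := by
  simp [leftClique]

@[simp] lemma w_notMem_leftClique (i : Fin (n + 1)) : w i ∉ leftClique n := by
  simp [leftClique]

@[simp] lemma v_mem_starClique {i j : Fin (n + 1)} : v j ∈ starClique n i ↔ j ≠ i := by
  simp [starClique]

@[simp] lemma w_mem_starClique {i j : Fin (n + 1)} : w j ∈ starClique n i ↔ j = i := by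
  simp [starClique]

lemma card_leftClique : #(leftClique n) = n + 1 := by
  simp [leftClique]

lemma card_starClique (i : Fin (n + 1)) : #(starClique n i) = n + 1 := by
  simp [starClique]

lemma isClique_leftClique : (Gamma n).IsClique (leftClique n : Set (GammaVert n)) := by
  intro x hx y hy hxy
  rcases eq_v_or_eq_w x with ⟨i, rfl⟩ | ⟨i, rfl⟩ <;>
    rcases eq_v_or_eq_w y with ⟨j, rfl⟩ | ⟨j, rfl⟩ <;> simp_all

lemma isClique_starClique (i : Fin (n + 1)) :
    (Gamma n).IsClique (starClique n i : Set (GammaVert n)) := by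
  intro x hx y hy hxy
  rcases eq_v_or_eq_w x with ⟨j, rfl⟩ | ⟨j, rfl⟩ <;>
    rcases eq_v_or_eq_w y with ⟨k, rfl⟩ | ⟨k, rfl⟩ <;> simp_all [eq_comm]

lemma eq_of_w_mem_of_w_mem {C : Finset (GammaVert n)} (hC : (Gamma n).IsClique (C : Set _))
    {i k : Fin (n + 1)} (hi : w i ∈ C) (hk : w k ∈ C) : i = k := by
  by_contra hne
  exact not_adj_w_w (hC hi hk (by simpa using hne))

lemma subset_starClique_of_w_mem {C : Finset (GammaVert n)} (hC : (Gamma n).IsClique (C : Set _))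
    {i : Fin (n + 1)} (hi : w i ∈ C) : C ⊆ starClique n i := by
  intro x hx
  rcases eq_v_or_eq_w x with ⟨j, rfl⟩ | ⟨j, rfl⟩
  · rw [v_mem_starClique]
    rintro rfl
    exact adj_v_w.1 (hC hx hi (v_ne_w _ _)) rfl
  · rw [w_mem_starClique]
    exact eq_of_w_mem_of_w_mem hC hx hi

lemma subset_leftClique_of_forall_w_notMem {C : Finset (GammaVert n)} (hC : ∀ i, w i ∉ C) :
    C ⊆ leftClique n := by
  intro x hx
  rcases eq_v_or_eq_w x with ⟨j, rfl⟩ | ⟨j, rfl⟩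
  exacts [v_mem_leftClique j, absurd hx (hC j)]

lemma card_le_of_isClique {C : Finset (GammaVert n)} (hC : (Gamma n).IsClique (C : Set _)) :
    #C ≤ n + 1 := by
  by_cases h : ∃ i, w i ∈ C
  · obtain ⟨i, hi⟩ := h
    exact (card_le_card (subset_starClique_of_w_mem hC hi)).trans (card_starClique i).le
  · push Not at h
    exact (card_le_card (subset_leftClique_of_forall_w_notMem h)).trans card_leftClique.le

lemma cliqueNum_eq : (Gamma n).cliqueNum = n + 1 :=
  IsGreatest.csSup_eq ⟨⟨leftClique n, isClique_leftClique, card_leftClique⟩,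
    fun _ ⟨_, hs⟩ => hs.card_eq ▸ card_le_of_isClique hs.isClique⟩

lemma v_mem_of_card_eq {C : Finset (GammaVert n)} (hC : (Gamma n).IsClique (C : Set _))
    (hcard : #C = n + 1) {i : Fin (n + 1)} (hi : w i ∉ C) : v i ∈ C := by
  by_cases h : ∃ k, w k ∈ C
  · obtain ⟨k, hk⟩ := h
    rw [eq_of_subset_of_card_le (subset_starClique_of_w_mem hC hk) (by rw [card_starClique, hcard]),
      v_mem_starClique]
    rintro rfl
    exact hi hk
  · push Not at h
    rw [eq_of_subset_of_card_le (subset_leftClique_of_forall_w_notMem h)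
      (by rw [card_leftClique, hcard])]
    exact v_mem_leftClique i

lemma exists_forall_w_notMem {r : ℕ} (hr : r ≤ n) {C : Fin r → Finset (GammaVert n)}
    (hC : ∀ j, (Gamma n).IsClique (C j : Set _)) : ∃ i, ∀ j, w i ∉ C j := by
  have hone : ∀ j, ∃ k, ∀ i, w i ∈ C j → i = k := by
    intro j
    by_cases h : ∃ k, w k ∈ C j
    · obtain ⟨k, hk⟩ := h
      exact ⟨k, fun i hi => eq_of_w_mem_of_w_mem (hC j) hi hk⟩
    · push Not at h
      exact ⟨0, fun i hi => absurd hi (h i)⟩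
  choose f hf using hone
  have hf' : ¬ Surjective f := fun hsurj => by
    have := Fintype.card_le_of_surjective f hsurj
    simp only [Fintype.card_fin] at this
    omega
  obtain ⟨i, hi⟩ := not_forall.1 hf'
  exact ⟨i, fun j hj => hi ⟨j, (hf j i hj).symm⟩⟩

lemma inf_nonempty_of_card_eq {r : ℕ} (hr : r ≤ n) {C : Fin r → Finset (GammaVert n)}
    (hC : ∀ j, (Gamma n).IsClique (C j : Set _)) (hcard : ∀ j, #(C j) = n + 1) :
    (univ.inf C).Nonempty := by
  obtain ⟨i, hi⟩ := exists_forall_w_notMem hr hC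
  exact ⟨v i, mem_inf.2 fun j _ => v_mem_of_card_eq (hC j) (hcard j) (hi j)⟩

lemma sum_card_le {r : ℕ} {C : Fin r → Finset (GammaVert n)}
    (hC : ∀ j, (Gamma n).IsClique (C j : Set _)) : ∑ j, #(C j) ≤ r * (n + 1) := by
  simpa using sum_le_card_nsmul univ (fun j => #(C j)) (n + 1) fun j _ => card_le_of_isClique (hC j)

lemma sum_card_lt_of_inf_eq_empty {r : ℕ} (hr : r ≤ n) {C : Fin r → Finset (GammaVert n)}
    (hC : ∀ j, (Gamma n).IsClique (C j : Set _)) (hinf : univ.inf C = ∅) :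
    ∑ j, #(C j) < r * (n + 1) := by
  obtain ⟨j, hj⟩ : ∃ j, #(C j) ≠ n + 1 := by
    by_contra! hall
    exact (inf_nonempty_of_card_eq hr hC hall).ne_empty hinf
  calc ∑ j, #(C j) < ∑ _j : Fin r, (n + 1) :=
        sum_lt_sum (fun j _ => card_le_of_isClique (hC j))
          ⟨j, mem_univ j, (card_le_of_isClique (hC j)).lt_of_ne hj⟩
    _ = r * (n + 1) := by simp

lemma inf_eq_empty_of_subset_starClique {r : ℕ} {C : Fin r → Finset (GammaVert n)}
    {f : Fin r → Fin (n + 1)} (hC : ∀ j, C j ⊆ starClique n (f j)) (hf : ∃ j j', f j ≠ f j')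
    (hv : ∀ i, ∃ j, v i ∉ C j) : univ.inf C = ∅ := by
  refine eq_empty_iff_forall_notMem.2 fun x hx => ?_
  have hx' : ∀ j, x ∈ C j := fun j => mem_inf.1 hx j (mem_univ j)
  rcases eq_v_or_eq_w x with ⟨i, rfl⟩ | ⟨i, rfl⟩
  · obtain ⟨j, hj⟩ := hv i
    exact hj (hx' j)
  · obtain ⟨j, j', hjj'⟩ := hf
    have hj := w_mem_starClique.1 (hC j (hx' j))
    have hj' := w_mem_starClique.1 (hC j' (hx' j'))
    exact hjj' (hj.symm.trans hj')

lemma isGreatest_cliqueSums_of_lt {r : ℕ} (hn : 1 ≤ n) (hr : n < r) :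
    IsGreatest (cliqueSums n r) (r * (n + 1)) := by
  have : Nonempty (Fin r) := ⟨⟨0, by omega⟩⟩
  have : Nontrivial (Fin (n + 1)) := Fin.nontrivial_iff_two_le.2 (by omega)
  have hf := invFun_surjective (Fin.castLE_injective hr)
  refine ⟨⟨fun j => starClique n (invFun (Fin.castLE hr) j), fun j => isClique_starClique _,
    inf_eq_empty_of_subset_starClique (fun j => subset_rfl) ?_ ?_, by simp [card_starClique]⟩, ?_⟩
  · obtain ⟨k, k', hkk'⟩ := exists_pair_ne (Fin (n + 1))
    obtain ⟨⟨j, rfl⟩, ⟨j', rfl⟩⟩ := And.intro (hf k) (hf k')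
    exact ⟨j, j', hkk'⟩
  · intro i
    obtain ⟨j, hj⟩ := hf i
    exact ⟨j, by simp [hj]⟩
  · rintro s ⟨C, hC, -, rfl⟩
    exact sum_card_le hC

lemma isGreatest_cliqueSums_self (hn : 2 ≤ n) :
    IsGreatest (cliqueSums n n) (n * (n + 1) - 1) := by
  obtain ⟨m, rfl⟩ : ∃ m, n = m + 1 := ⟨n - 1, by omega⟩
  have : Nontrivial (Fin (m + 1)) := Fin.nontrivial_iff_two_le.2 hn
  -- the star cliques at `0, …, m` meet only in `v (Fin.last (m + 1))`, removed from the last one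
  set C : Fin (m + 1) → Finset (GammaVert (m + 1)) := Fin.lastCases
    ((starClique (m + 1) (Fin.last m).castSucc).erase (v (Fin.last (m + 1))))
    (fun j => starClique (m + 1) j.castSucc.castSucc)
  have hC : ∀ j, C j ⊆ starClique (m + 1) j.castSucc :=
    Fin.lastCases (by simp [C, erase_subset]) (by simp [C])
  have hv : ∀ i, ∃ j, v i ∉ C j :=
    Fin.lastCases ⟨Fin.last m, by simp [C]⟩ fun k => ⟨k, fun hk => by simpa using hC k hk⟩
  refine ⟨⟨C, fun j => (isClique_starClique _).subset (coe_subset.2 (hC j)),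
    inf_eq_empty_of_subset_starClique hC ?_ hv, ?_⟩, ?_⟩
  · obtain ⟨j, j', hjj'⟩ := exists_pair_ne (Fin (m + 1))
    exact ⟨j, j', Fin.castSucc_injective _ |>.ne hjj'⟩
  · rw [Fin.sum_univ_castSucc]
    simp only [C, Fin.lastCases_castSucc, Fin.lastCases_last, card_starClique, sum_const,
      card_univ, Fintype.card_fin, smul_eq_mul]
    rw [card_erase_of_mem (v_mem_starClique.2 (Fin.castSucc_lt_last _).ne'), card_starClique]
    ring_nf
    omega
  · rintro s ⟨C, hC, hinf, rfl⟩
    have := sum_card_lt_of_inf_eq_empty le_rfl hC hinf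
    omega

end Gamma

/-- Instability of the growth (Proposition 2.3, combinatorial level): for the sequence
`a r = z_r(Γₙ)`, one has `a (n+1) - a n > n + 1` while `a (r+1) - a r = n + 1` for all
`r > n`; so the difference sequence is not constant but is eventually constant, equal to
the clique number `n + 1` of `Γₙ`. -/
theorem stmt_5 (n : ℕ) (hn : 2 ≤ n) (a : ℕ → ℕ)
    (ha : ∀ r : ℕ, 2 ≤ r → IsGreatest (cliqueSums n r) (a r)) :
    n + 1 < a (n + 1) - a n ∧
    (∀ r : ℕ, n < r → a (r + 1) - a r = n + 1) ∧
    (Gamma n).cliqueNum = n + 1 := by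
  have ha_self : a n = n * (n + 1) - 1 := (ha n hn).unique (Gamma.isGreatest_cliqueSums_self hn)
  have ha_lt : ∀ r, n < r → a r = r * (n + 1) := fun r hr =>
    (ha r (by omega)).unique (Gamma.isGreatest_cliqueSums_of_lt (by omega) hr)
  refine ⟨?_, fun r hr => ?_, Gamma.cliqueNum_eq⟩
  · rw [ha_self, ha_lt (n + 1) (lt_add_one n), add_one_mul n (n + 1)]
    have : 1 ≤ n * (n + 1) := Nat.one_le_iff_ne_zero.2 (by positivity)
    omega
  · rw [ha_lt r hr, ha_lt (r + 1) (by omega), add_one_mul, Nat.add_sub_cancel_left]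
end

section
/- In the graph Γₙ, any n of the maximal cliques C₀,…,C_{n+1} have nonempty common intersection (i.e. the family of maximal cliques has the property that every subfamily of size at most n intersects), but C₁ ∩ C₂ ∩ ⋯ ∩ C_{n+1} = ∅. -/
/-- The maximal cliques of `Γₙ`: `C 0 = {v₀, …, vₙ}` and
`C (i+1) = ({v₀, …, vₙ} \ {vᵢ}) ∪ {wᵢ}` for `0 ≤ i ≤ n`. -/
def maxClique (n : ℕ) (k : Fin (n + 2)) : Finset (GammaVert n) :=
  match k with
  | ⟨0, _⟩ => Finset.univ.image Sum.inl
  | ⟨i + 1, h⟩ =>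
      ((Finset.univ.image Sum.inl).erase (Sum.inl ⟨i, by omega⟩)) ∪ {Sum.inr ⟨i, by omega⟩}

open Finset

namespace maxClique

variable {n : ℕ}

theorem inl_mem_zero (j : Fin (n + 1)) : (Sum.inl j : GammaVert n) ∈ maxClique n 0 :=
  mem_image_of_mem (f := Sum.inl) (mem_univ j)

theorem inl_mem_succ_iff {i j : Fin (n + 1)} :
    (Sum.inl j : GammaVert n) ∈ maxClique n i.succ ↔ i ≠ j := by
  -- `GammaVert` is a plain `def`, so the `Sum` simp lemmas only fire at the unfolded type.
  change _ ∈ ((univ.image Sum.inl).erase (Sum.inl i) ∪ {Sum.inr i} :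
    Finset (Fin (n + 1) ⊕ Fin (n + 1))) ↔ _
  simp [eq_comm]

theorem inr_mem_succ_iff {i m : Fin (n + 1)} :
    (Sum.inr m : GammaVert n) ∈ maxClique n i.succ ↔ m = i := by
  change _ ∈ ((univ.image Sum.inl).erase (Sum.inl i) ∪ {Sum.inr i} :
    Finset (Fin (n + 1) ⊕ Fin (n + 1))) ↔ _
  simp

theorem inl_mem_inf {s : Finset (Fin (n + 2))} {j : Fin (n + 1)} (hj : j.succ ∉ s) :
    (Sum.inl j : GammaVert n) ∈ s.inf (maxClique n) := by
  refine mem_inf.2 fun k hk => ?_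
  cases k using Fin.cases with
  | zero => exact inl_mem_zero j
  | succ i => exact inl_mem_succ_iff.2 fun hij => hj (hij ▸ hk)

theorem exists_notMem_succ (hn : 1 ≤ n) (x : GammaVert n) :
    ∃ i : Fin (n + 1), x ∉ maxClique n i.succ := by
  cases x with
  | inl j => exact ⟨j, fun h => inl_mem_succ_iff.1 h rfl⟩
  | inr m =>
    have : Nontrivial (Fin (n + 1)) := Fin.nontrivial_iff_two_le.2 (by omega)
    obtain ⟨i, hi⟩ := exists_ne m
    exact ⟨i, fun h => hi (inr_mem_succ_iff.1 h).symm⟩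

end maxClique

/-- Any at most `n` of the maximal cliques `C₀, …, C_{n+1}` of `Γₙ` have a common vertex,
but `C₁ ∩ ⋯ ∩ C_{n+1} = ∅`. -/
theorem stmt_6 (n : ℕ) (hn : 2 ≤ n) :
    (∀ s : Finset (Fin (n + 2)), s.card ≤ n → (s.inf (maxClique n)).Nonempty) ∧
    (Finset.univ.erase (0 : Fin (n + 2))).inf (maxClique n) = ∅ := by
  constructor
  · intro s hs
    obtain ⟨k, hk, hks⟩ := exists_mem_notMem_of_card_lt_card
      (s := s) (t := univ.map (Fin.succEmb (n + 1))) (by simpa using Nat.lt_succ_of_le hs)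
    obtain ⟨j, -, rfl⟩ := mem_map.1 hk
    exact ⟨_, maxClique.inl_mem_inf hks⟩
  · refine eq_empty_of_forall_notMem fun x hx => ?_
    obtain ⟨i, hi⟩ := maxClique.exists_notMem_succ (by omega) x
    exact hi (mem_inf.1 hx i.succ (mem_erase.2 ⟨Fin.succ_ne_zero i, mem_univ _⟩))
end

section
/- Let A be a commutative ring and r ≥ 2. The kernel of the multiplication map μ_r : A^{⊗r} → A (over a base ring k, with A a commutative k-algebra generated as a k-algebra by a set V) is the ideal generated by the elements v(i) − v(i+1) for v ∈ V and 1 ≤ i ≤ r−1, where v(i) = 1⊗⋯⊗v⊗⋯⊗1 with v in the i-th tensor factor. -/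
open scoped TensorProduct

/-- The multiplication map `μ_r : A^{⊗r} → A`, `a₁ ⊗ ⋯ ⊗ a_r ↦ a₁ ⋯ a_r`, as an algebra
homomorphism. -/
noncomputable def mulAlgHom (k A : Type*) [CommRing k] [CommRing A] [Algebra k A] (r : ℕ) :
    (⨂[k] _ : Fin r, A) →ₐ[k] A :=
  PiTensorProduct.liftAlgHom (MultilinearMap.mkPiAlgebra k (Fin r) A)
    (by simp) (by intro x y; simp [Finset.prod_mul_distrib])

/-- `v(i) = 1 ⊗ ⋯ ⊗ v ⊗ ⋯ ⊗ 1` with `v` in the `i`-th tensor factor. -/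
noncomputable def slot (k A : Type*) [CommRing k] [CommRing A] [Algebra k A] (r : ℕ)
    (i : Fin r) (v : A) : ⨂[k] _ : Fin r, A :=
  PiTensorProduct.singleAlgHom (R := k) (A := fun _ : Fin r => A) i v

/-! Modulo the ideal `J` spanned by the `v(i) - v(i+1)`, adjacent slot embeddings
`A → A^{⊗r}`, hence all of them, agree on the generators `V`, and so (being algebra maps) on all
of `A`. An algebra map out of `A^{⊗r}` whose restrictions to the slots all coincide factors
through `μ_r`; applied to `A^{⊗r} → A^{⊗r}/J` this gives `ker μ_r ⊆ J`, while `J ⊆ ker μ_r`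
because `μ_r (v(i)) = v` for every `i`. -/

lemma Fin.apply_eq_apply_zero_of_succ {α : Type*} {r : ℕ} [NeZero r] (f : Fin r → α)
    (h : ∀ i j : Fin r, (j : ℕ) = (i : ℕ) + 1 → f i = f j) (i : Fin r) : f i = f 0 := by
  obtain ⟨n, hn⟩ := i
  induction n with
  | zero => rfl
  | succ m ih => rw [← h ⟨m, by omega⟩ ⟨m + 1, hn⟩ rfl, ih]

section TensorPower

variable {k A : Type*} [CommRing k] [CommRing A] [Algebra k A] {r : ℕ}

lemma slot_eq_singleAlgHom (i : Fin r) (a : A) :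
    slot k A r i a = PiTensorProduct.singleAlgHom (R := k) (A := fun _ : Fin r => A) i a :=
  rfl

@[simp]
lemma mulAlgHom_slot (i : Fin r) (a : A) : mulAlgHom k A r (slot k A r i a) = a := by
  rw [slot, mulAlgHom, PiTensorProduct.singleAlgHom_apply]
  erw [PiTensorProduct.liftAlgHom_apply]
  rw [PiTensorProduct.lift.tprod, MultilinearMap.mkPiAlgebra_apply, MonoidHom.mulSingle_apply,
    Finset.prod_pi_mulSingle', if_pos (Finset.mem_univ i)]

lemma AlgHom.eq_comp_mulAlgHom {B : Type*} [Semiring B] [Algebra k B]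
    (f : (⨂[k] _ : Fin r, A) →ₐ[k] B) (g : A →ₐ[k] B)
    (h : ∀ i a, f (slot k A r i a) = g a) : f = g.comp (mulAlgHom k A r) :=
  PiTensorProduct.algHom_ext fun i => AlgHom.ext fun a => by
    simp only [AlgHom.comp_apply, ← slot_eq_singleAlgHom, h, mulAlgHom_slot]

variable (k A r)

def adjacentSlotDiffs (V : Set A) : Set (⨂[k] _ : Fin r, A) :=
  {x | ∃ v ∈ V, ∃ i j : Fin r, (j : ℕ) = (i : ℕ) + 1 ∧ x = slot k A r i v - slot k A r j v}

variable {k A r}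

lemma span_adjacentSlotDiffs_le_ker (V : Set A) :
    Ideal.span (adjacentSlotDiffs k A r V) ≤ RingHom.ker (mulAlgHom k A r) := by
  rw [Ideal.span_le]
  rintro _ ⟨v, -, i, j, -, rfl⟩
  simp [RingHom.mem_ker]

lemma mk_slot_eq_mk_slot_zero [NeZero r] {V : Set A} (hV : Algebra.adjoin k V = ⊤)
    (i : Fin r) (a : A) :
    Ideal.Quotient.mkₐ k (Ideal.span (adjacentSlotDiffs k A r V)) (slot k A r i a) =
      Ideal.Quotient.mkₐ k (Ideal.span (adjacentSlotDiffs k A r V)) (slot k A r 0 a) := by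
  set q := Ideal.Quotient.mkₐ k (Ideal.span (adjacentSlotDiffs k A r V))
  have hgen : Set.EqOn (q.comp (PiTensorProduct.singleAlgHom i))
      (q.comp (PiTensorProduct.singleAlgHom 0)) V := fun v hv =>
    Fin.apply_eq_apply_zero_of_succ (fun j => q (slot k A r j v))
      (fun j j' hj => Ideal.Quotient.eq.mpr (Ideal.subset_span ⟨v, hv, j, j', hj, rfl⟩)) i
  exact DFunLike.congr_fun (AlgHom.ext_of_adjoin_eq_top hV hgen) a

lemma ker_mulAlgHom_le_span_adjacentSlotDiffs [NeZero r] {V : Set A}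
    (hV : Algebra.adjoin k V = ⊤) :
    RingHom.ker (mulAlgHom k A r) ≤ Ideal.span (adjacentSlotDiffs k A r V) := by
  set q := Ideal.Quotient.mkₐ k (Ideal.span (adjacentSlotDiffs k A r V))
  have hq : q = (q.comp (PiTensorProduct.singleAlgHom 0)).comp (mulAlgHom k A r) :=
    q.eq_comp_mulAlgHom _ (mk_slot_eq_mk_slot_zero hV)
  intro x hx
  have hqx : q x = 0 := by rw [hq, AlgHom.comp_apply, RingHom.mem_ker.mp hx, map_zero]
  exact Ideal.Quotient.eq_zero_iff_mem.mp hqx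

end TensorPower

/-- Lemma 4.1: if the commutative `k`-algebra `A` is generated by `V`, then the kernel of the
multiplication map `μ_r : A^{⊗r} → A` is the ideal generated by the elements
`v(i) - v(i+1)` for `v ∈ V` and `1 ≤ i ≤ r - 1`. -/
theorem stmt_7 (k A : Type*) [CommRing k] [CommRing A] [Algebra k A]
    (V : Set A) (hV : Algebra.adjoin k V = ⊤) (r : ℕ) (hr : 2 ≤ r) :
    {x : ⨂[k] _ : Fin r, A | mulAlgHom k A r x = 0} =
      (Ideal.span {x : ⨂[k] _ : Fin r, A | ∃ v ∈ V, ∃ i j : Fin r,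
        (j : ℕ) = (i : ℕ) + 1 ∧ x = slot k A r i v - slot k A r j v} : Set _) := by
  have : NeZero r := ⟨by omega⟩
  exact congrArg SetLike.coe ((ker_mulAlgHom_le_span_adjacentSlotDiffs hV).antisymm
    (span_adjacentSlotDiffs_le_ker V))
end

section
/- Let A be the exterior algebra over ℚ on a finite-dimensional vector space V (placed in odd degrees, so all generators square to zero and anticommute). Let K_r ⊆ A^{⊗r} be the kernel of the r-fold multiplication map. Then K_r^{n+1} = 0 for n = (r−1)·dim V. -/
/-!
Let `f : V^r → V` be the sum map and `P = ι(ker f) ⊆ Λ(V^r)`, so that `μ_r = Λ(f)`. Since `f` has a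
section `s`, every `x` is congruent to `Λ(s)(Λ(f) x)` modulo the ideal `P·Λ(V^r)`, hence
`K_r ⊆ P·Λ(V^r)`. Elements of `P` are odd, so they commute with everything up to the grade
involution: `Λ·P ⊆ P·Λ`, whence `(P·Λ)^k ⊆ P^k·Λ`. Finally `P^k` is the image of `⋀^k (ker f)`,
which vanishes for `k > dim ker f = (r - 1)·dim V`.
-/

/-- The `r`-fold multiplication map `μ_r : Λ(V)^{⊗r} → Λ(V)` of the exterior algebra.
Here the `r`-fold *graded* tensor power `Λ(V)^{⊗r}` (with Koszul signs) is identified with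
the exterior algebra `Λ(V^{⊕r}) = Λ(Fin r → V)`, under which the `i`-th factor `Λ(V)` embeds
as the subalgebra generated by the `i`-th summand, and the multiplication map corresponds to
the algebra map induced by the sum map `V^{⊕r} → V`. -/
noncomputable def extMul (V : Type*) [AddCommGroup V] [Module ℚ V] (r : ℕ) :
    ExteriorAlgebra ℚ (Fin r → V) →ₐ[ℚ] ExteriorAlgebra ℚ V :=
  ExteriorAlgebra.lift ℚ
    ⟨(ExteriorAlgebra.ι ℚ).comp (∑ i : Fin r, LinearMap.proj i),
      fun m => by rw [LinearMap.comp_apply]; exact ExteriorAlgebra.ι_sq_zero _⟩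

namespace Submodule

variable {R A : Type*} [CommSemiring R] [Semiring A] [Algebra R A] {P : Submodule R A}

theorem mul_top_mul_top_le (P : Submodule R A) : P * ⊤ * ⊤ ≤ P * ⊤ := by
  rw [mul_assoc]
  exact mul_le_mul_right le_top P

theorem mul_mem_mul_top {x : A} (hx : x ∈ P * ⊤) (a : A) : x * a ∈ P * ⊤ :=
  P.mul_top_mul_top_le (mul_mem_mul hx mem_top)

theorem mul_mem_mul_top_of_top_mul_le (hP : ⊤ * P ≤ P * ⊤) (a : A) {x : A} (hx : x ∈ P * ⊤) :
    a * x ∈ P * ⊤ := by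
  have h : ⊤ * (P * ⊤) ≤ P * ⊤ := by
    rw [← mul_assoc]
    exact (mul_le_mul_left hP ⊤).trans P.mul_top_mul_top_le
  exact h (mul_mem_mul mem_top hx)

theorem mul_top_pow_le_of_top_mul_le (hP : ⊤ * P ≤ P * ⊤) (k : ℕ) :
    (P * ⊤) ^ k ≤ P ^ k * ⊤ := by
  induction k with
  | zero => simp
  | succ k ih =>
    calc (P * ⊤) ^ (k + 1) ≤ P ^ k * ⊤ * (P * ⊤) := by
          rw [pow_succ]; exact mul_le_mul_left ih _
      _ = P ^ k * (⊤ * P) * ⊤ := by simp only [mul_assoc]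
      _ ≤ P ^ k * (P * ⊤) * ⊤ := mul_le_mul_left (mul_le_mul_right hP _) _
      _ = P ^ (k + 1) * ⊤ * ⊤ := by simp only [pow_succ, mul_assoc]
      _ ≤ P ^ (k + 1) * ⊤ := mul_top_mul_top_le _

end Submodule

namespace ExteriorAlgebra

section CommRing

variable {R M N : Type*} [CommRing R] [AddCommGroup M] [Module R M] [AddCommGroup N] [Module R N]

theorem mul_ι_eq_ι_mul_involute (a : ExteriorAlgebra R M) (m : M) :
    a * ι R m = ι R m * CliffordAlgebra.involute a := by
  induction a using ExteriorAlgebra.induction with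
  | algebraMap c => rw [Algebra.commutes, AlgHom.commutes]
  | ι v =>
    rw [CliffordAlgebra.involute_ι, mul_neg, eq_neg_iff_add_eq_zero]
    exact ι_add_mul_swap (R := R) v m
  | mul x y hx hy => rw [mul_assoc, hy, ← mul_assoc, hx, mul_assoc, map_mul]
  | add x y hx hy => rw [add_mul, hx, hy, map_add, mul_add]

theorem top_mul_map_ι_le (W : Submodule R M) :
    ⊤ * W.map (ι R) ≤ W.map (ι R) * (⊤ : Submodule R (ExteriorAlgebra R M)) := by
  rw [Submodule.mul_le]
  rintro a - - ⟨w, hw, rfl⟩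
  rw [mul_ι_eq_ι_mul_involute]
  exact Submodule.mul_mem_mul ⟨w, hw, rfl⟩ Submodule.mem_top

theorem sub_map_map_mem_map_ι_ker_mul_top {f : M →ₗ[R] N} {s : N →ₗ[R] M}
    (hfs : f ∘ₗ s = LinearMap.id) (x : ExteriorAlgebra R M) :
    x - map s (map f x) ∈ (LinearMap.ker f).map (ι R) * ⊤ := by
  induction x using ExteriorAlgebra.induction with
  | algebraMap c => simp
  | ι v =>
    rw [map_apply_ι, map_apply_ι, ← map_sub, ← mul_one (ι R _)]
    refine Submodule.mul_mem_mul ⟨_, ?_, rfl⟩ Submodule.mem_top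
    rw [SetLike.mem_coe, LinearMap.mem_ker, map_sub, ← LinearMap.comp_apply f s, hfs,
      LinearMap.id_apply, sub_self]
  | mul x y hx hy =>
    have hsplit : x * y - map s (map f (x * y)) =
        x * (y - map s (map f y)) + (x - map s (map f x)) * map s (map f y) := by
      simp only [map_mul]; noncomm_ring
    rw [hsplit]
    exact add_mem (Submodule.mul_mem_mul_top_of_top_mul_le (top_mul_map_ι_le _) x hy)
      (Submodule.mul_mem_mul_top hx _)
  | add x y hx hy =>
    have hsplit : x + y - map s (map f (x + y)) =
        (x - map s (map f x)) + (y - map s (map f y)) := by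
      simp only [map_add]; abel
    rw [hsplit]
    exact add_mem hx hy

theorem ker_map_le_of_comp_eq_id {f : M →ₗ[R] N} {s : N →ₗ[R] M} (hfs : f ∘ₗ s = LinearMap.id) :
    LinearMap.ker (map f).toLinearMap ≤ (LinearMap.ker f).map (ι R) * ⊤ := by
  intro x hx
  simpa [show map f x = 0 from hx] using sub_map_map_mem_map_ι_ker_mul_top hfs x

end CommRing

variable {K M : Type*} [Field K] [AddCommGroup M] [Module K M] [FiniteDimensional K M]

theorem exteriorPower_eq_bot_of_finrank_lt {n : ℕ} (hn : Module.finrank K M < n) :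
    ⋀[K]^n M = ⊥ := by
  rw [← Submodule.finrank_eq_zero, exteriorPower.finrank_eq, Nat.choose_eq_zero_of_lt hn]

theorem map_ι_pow_eq_bot_of_finrank_lt (W : Submodule K M) {n : ℕ}
    (hn : Module.finrank K W < n) : W.map (ι K) ^ n = ⊥ := by
  rw [← W.range_subtype, ← ι_range_map_map, ← Submodule.map_pow]
  exact (congrArg _ (exteriorPower_eq_bot_of_finrank_lt hn)).trans (Submodule.map_bot _)

end ExteriorAlgebra

section SumProj

variable {ι V : Type*} [Fintype ι]

theorem sum_proj_comp_single {R : Type*} [Semiring R] [AddCommMonoid V] [Module R V]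
    [DecidableEq ι] (i : ι) :
    (∑ j : ι, LinearMap.proj j) ∘ₗ LinearMap.single R (fun _ : ι => V) i = LinearMap.id := by
  ext v
  simp [Pi.single_apply]

theorem finrank_ker_sum_proj {K : Type*} [Field K] [AddCommGroup V] [Module K V]
    [FiniteDimensional K V] [Nonempty ι] :
    Module.finrank K (LinearMap.ker (∑ i : ι, LinearMap.proj i : (ι → V) →ₗ[K] V)) =
      (Fintype.card ι - 1) * Module.finrank K V := by
  classical
  have hsurj : Function.Surjective (∑ i : ι, LinearMap.proj i : (ι → V) →ₗ[K] V) :=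
    Function.RightInverse.surjective
      (LinearMap.congr_fun (sum_proj_comp_single (Classical.arbitrary ι)))
  have := LinearMap.finrank_range_add_finrank_ker (∑ i : ι, LinearMap.proj i : (ι → V) →ₗ[K] V)
  rw [LinearMap.range_eq_top.2 hsurj, finrank_top, Module.finrank_pi_fintype, Finset.sum_const,
    Finset.card_univ, smul_eq_mul] at this
  rw [Nat.sub_one_mul]
  omega

end SumProj

open ExteriorAlgebra in
/-- The key computation in Theorem 1.4: for `A = Λ(V)` the exterior algebra on a
finite-dimensional `ℚ`-vector space (all generators odd), the kernel `K_r` of the `r`-fold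
multiplication map `A^{⊗r} → A` satisfies `K_r^{n+1} = 0` for `n = (r-1)·dim V`. -/
theorem stmt_8 (V : Type*) [AddCommGroup V] [Module ℚ V] [FiniteDimensional ℚ V]
    (r : ℕ) (hr : 2 ≤ r) :
    (LinearMap.ker (extMul V r).toLinearMap : Submodule ℚ (ExteriorAlgebra ℚ (Fin r → V))) ^
      ((r - 1) * Module.finrank ℚ V + 1) = ⊥ := by
  set f : (Fin r → V) →ₗ[ℚ] V := ∑ i : Fin r, LinearMap.proj i
  have : Nonempty (Fin r) := ⟨⟨0, by omega⟩⟩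
  have hdim : Module.finrank ℚ (LinearMap.ker f) < (r - 1) * Module.finrank ℚ V + 1 := by
    rw [finrank_ker_sum_proj, Fintype.card_fin]
    exact Nat.lt_succ_self _
  have hmap : extMul V r = map f := rfl
  have hker : LinearMap.ker (extMul V r).toLinearMap ≤ (LinearMap.ker f).map (ι ℚ) * ⊤ :=
    hmap ▸ ker_map_le_of_comp_eq_id (sum_proj_comp_single (Classical.arbitrary (Fin r)))
  rw [eq_bot_iff]
  calc _ ≤ ((LinearMap.ker f).map (ι ℚ) * ⊤) ^ ((r - 1) * Module.finrank ℚ V + 1) :=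
        pow_le_pow_left' hker _
    _ ≤ (LinearMap.ker f).map (ι ℚ) ^ ((r - 1) * Module.finrank ℚ V + 1) * ⊤ :=
        Submodule.mul_top_pow_le_of_top_mul_le (top_mul_map_ι_le _) _
    _ = ⊥ := by rw [map_ι_pow_eq_bot_of_finrank_lt _ hdim, Submodule.bot_mul]
end

section
/- In the graph Γₙ (n ≥ 2), for 2 ≤ r ≤ n one can choose cliques D₁ = C₁, …, D_{r−1} = C_{r−1}, and D_r = C_r ∖ {v_r,…,v_n}, all of which are cliques, with D₁ ∩ ⋯ ∩ D_r = ∅ and |D₁| + ⋯ + |D_r| = (r−1)(n+1) + r; moreover no choice of r cliques with empty intersection achieves a larger total size. -/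
open Finset

namespace SimpleGraph

variable {α β : Type*} {G : SimpleGraph (α ⊕ β)}

lemma IsClique.card_toRight_le_one_s18 (hβ : ∀ x y, ¬ G.Adj (.inr x) (.inr y))
    {E : Finset (α ⊕ β)} (hE : G.IsClique (E : Set (α ⊕ β))) : #E.toRight ≤ 1 :=
  card_le_one.2 fun x hx y hy => by_contra fun hxy =>
    hβ x y (hE (mem_toRight.1 hx) (mem_toRight.1 hy) (Sum.inr_injective.ne hxy))

lemma IsClique.card_add_card_compl_toLeft_le [Fintype α] [DecidableEq α]
    (hβ : ∀ x y, ¬ G.Adj (.inr x) (.inr y))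
    {E : Finset (α ⊕ β)} (hE : G.IsClique (E : Set (α ⊕ β))) :
    #E + #E.toLeftᶜ ≤ Fintype.card α + 1 := by
  have := hE.card_toRight_le_one_s18 hβ
  rw [← card_toLeft_add_card_toRight, ← card_add_card_compl E.toLeft]
  omega

theorem sum_card_le_of_isClique_of_inf_eq_empty {ι : Type*} [Fintype ι] [Fintype α]
    [DecidableEq α] [Fintype β] [DecidableEq β] (hβ : ∀ x y, ¬ G.Adj (.inr x) (.inr y))
    (E : ι → Finset (α ⊕ β)) (hE : ∀ i, G.IsClique (E i : Set (α ⊕ β)))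
    (hinf : univ.inf E = ∅) :
    ∑ i, #(E i) ≤ (Fintype.card ι - 1) * Fintype.card α + Fintype.card ι := by
  have hmissing : Fintype.card α ≤ ∑ i, #(E i).toLeftᶜ :=
    calc Fintype.card α = #(univ : Finset α) := card_univ.symm
      _ ≤ #(univ.biUnion fun i => (E i).toLeftᶜ) := card_le_card fun a _ => by
          have : Sum.inl a ∉ univ.inf E := hinf ▸ notMem_empty _
          simpa [mem_inf] using this
      _ ≤ ∑ i, #(E i).toLeftᶜ := card_biUnion_le
  have hsum : ∑ i, (#(E i) + #(E i).toLeftᶜ) ≤ Fintype.card ι * (Fintype.card α + 1) :=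
    (sum_le_sum fun i _ => (hE i).card_add_card_compl_toLeft_le hβ).trans_eq (by simp)
  rw [sum_add_distrib] at hsum
  generalize Fintype.card ι = r at hsum ⊢
  rcases r with _ | r
  · simp only [zero_mul, zero_tsub, add_zero] at hsum ⊢
    omega
  · rw [Nat.add_sub_cancel]
    nlinarith

end SimpleGraph

section Gamma

variable {n : ℕ}

lemma gamma_adj_inl_inl {x y : Fin (n + 1)} (h : x ≠ y) : (Gamma n).Adj (.inl x) (.inl y) :=
  ⟨Sum.inl_injective.ne h, .inl trivial⟩

lemma gamma_adj_inl_inr {j i : Fin (n + 1)} (h : i ≠ j) : (Gamma n).Adj (.inl j) (.inr i) :=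
  ⟨Sum.inl_ne_inr, .inl h⟩

lemma gamma_not_adj_inr_inr (x y : Fin (n + 1)) : ¬ (Gamma n).Adj (.inr x) (.inr y) :=
  fun h => h.2.elim id id

lemma inl_mem_maxClique {k : Fin (n + 2)} {j : Fin (n + 1)} :
    (Sum.inl j : GammaVert n) ∈ maxClique n k ↔ (j : ℕ) + 1 ≠ k := by
  obtain ⟨_ | i, hk⟩ := k
  · show Sum.inl j ∈ (univ.image Sum.inl : Finset (Fin (n + 1) ⊕ Fin (n + 1))) ↔ _
    simp
  · show Sum.inl j ∈ ((univ.image Sum.inl).erase (Sum.inl ⟨i, by omega⟩) ∪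
      {Sum.inr ⟨i, by omega⟩} : Finset (Fin (n + 1) ⊕ Fin (n + 1))) ↔ _
    simp [Fin.ext_iff]

lemma inr_mem_maxClique {k : Fin (n + 2)} {j : Fin (n + 1)} :
    (Sum.inr j : GammaVert n) ∈ maxClique n k ↔ (j : ℕ) + 1 = k := by
  obtain ⟨_ | i, hk⟩ := k
  · show Sum.inr j ∈ (univ.image Sum.inl : Finset (Fin (n + 1) ⊕ Fin (n + 1))) ↔ _
    simp
  · show Sum.inr j ∈ ((univ.image Sum.inl).erase (Sum.inl ⟨i, by omega⟩) ∪
      {Sum.inr ⟨i, by omega⟩} : Finset (Fin (n + 1) ⊕ Fin (n + 1))) ↔ _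
    simp [Fin.ext_iff]

lemma maxClique_isClique (k : Fin (n + 2)) :
    (Gamma n).IsClique (maxClique n k : Set (GammaVert n)) := by
  rintro (x | x) hx (y | y) hy hxy
  · exact gamma_adj_inl_inl fun h => hxy (congrArg Sum.inl h)
  · have hx' := inl_mem_maxClique.1 (mem_coe.1 hx)
    have hy' := inr_mem_maxClique.1 (mem_coe.1 hy)
    exact gamma_adj_inl_inr (by rintro rfl; exact hx' hy')
  · have hx' := inr_mem_maxClique.1 (mem_coe.1 hx)
    have hy' := inl_mem_maxClique.1 (mem_coe.1 hy)
    exact (gamma_adj_inl_inr (by rintro rfl; exact hy' hx')).symm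
  · have hx' := inr_mem_maxClique.1 (mem_coe.1 hx)
    have hy' := inr_mem_maxClique.1 (mem_coe.1 hy)
    exact absurd (congrArg Sum.inr (Fin.ext (by omega))) hxy

lemma card_maxClique (k : Fin (n + 2)) : #(maxClique n k) = n + 1 := by
  have hl : (maxClique n k).toLeft = univ.filter fun j : Fin (n + 1) => (j : ℕ) + 1 ≠ k :=
    ext fun j => mem_toLeft.trans (inl_mem_maxClique.trans (by simp))
  have hr : (maxClique n k).toRight = univ.filter fun j : Fin (n + 1) => (j : ℕ) + 1 = k :=
    ext fun j => mem_toRight.trans (inr_mem_maxClique.trans (by simp))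
  calc #(maxClique n k) = #(maxClique n k).toLeft + #(maxClique n k).toRight :=
        card_toLeft_add_card_toRight.symm
    _ = n + 1 := by
      rw [hl, hr, add_comm, card_filter_add_card_filter_not, card_univ, Fintype.card_fin]

def leftVertsFrom (n r : ℕ) : Finset (GammaVert n) :=
  (univ.filter fun j : Fin (n + 1) => r ≤ (j : ℕ)).image Sum.inl

lemma inl_mem_leftVertsFrom {r : ℕ} {j : Fin (n + 1)} :
    (Sum.inl j : GammaVert n) ∈ leftVertsFrom n r ↔ r ≤ (j : ℕ) :=
  Sum.inl_injective.mem_finset_image.trans (by simp)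

lemma inr_notMem_leftVertsFrom {r : ℕ} {j : Fin (n + 1)} :
    (Sum.inr j : GammaVert n) ∉ leftVertsFrom n r := fun h => by
  obtain ⟨_, _, hj⟩ := mem_image.1 h
  exact Sum.inl_ne_inr hj

lemma card_leftVertsFrom (r : ℕ) : #(leftVertsFrom n r) = n + 1 - r := by
  have := card_filter_add_card_filter_not (s := univ) (fun j : Fin (n + 1) => (j : ℕ) < r)
  simp only [Fin.card_filter_val_lt, not_lt, card_univ, Fintype.card_fin] at this
  exact (card_image_of_injective _ Sum.inl_injective).trans (by omega)

lemma inl_mem_maxClique_sdiff_leftVertsFrom {r : ℕ} (hr : r < n + 2) {j : Fin (n + 1)} :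
    (Sum.inl j : GammaVert n) ∈ maxClique n ⟨r, hr⟩ \ leftVertsFrom n r ↔ (j : ℕ) + 1 < r := by
  have hC : (Sum.inl j : GammaVert n) ∈ maxClique n ⟨r, hr⟩ ↔ (j : ℕ) + 1 ≠ r := inl_mem_maxClique
  exact mem_sdiff.trans ((and_congr hC (not_congr inl_mem_leftVertsFrom)).trans (by omega))

lemma inr_mem_maxClique_sdiff_leftVertsFrom {r : ℕ} (hr : r < n + 2) {j : Fin (n + 1)} :
    (Sum.inr j : GammaVert n) ∈ maxClique n ⟨r, hr⟩ \ leftVertsFrom n r ↔ (j : ℕ) + 1 = r :=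
  mem_sdiff.trans ((and_iff_left inr_notMem_leftVertsFrom).trans inr_mem_maxClique)

lemma card_maxClique_sdiff_leftVertsFrom {r : ℕ} (hr : r < n + 2) :
    #(maxClique n ⟨r, hr⟩ \ leftVertsFrom n r) = r := by
  have hsub : leftVertsFrom n r ⊆ maxClique n ⟨r, hr⟩ := by
    rintro (j | j) hj
    · exact inl_mem_maxClique.2 (show (j : ℕ) + 1 ≠ r by have := inl_mem_leftVertsFrom.1 hj; omega)
    · exact absurd hj inr_notMem_leftVertsFrom
  rw [card_sdiff_of_subset hsub, card_maxClique, card_leftVertsFrom]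
  omega

end Gamma

/-- For `2 ≤ r ≤ n`, the cliques `D₁ = C₁, …, D_{r-1} = C_{r-1}`,
`D_r = C_r − {v_r, …, v_n}` are cliques of `Γₙ` with empty common intersection and total
size `(r-1)(n+1) + r`, and no `r` cliques with empty common intersection do better. -/
theorem stmt_18 (n r : ℕ) (hr : 2 ≤ r) (hrn : r ≤ n)
    (D : Fin r → Finset (GammaVert n))
    (hD : ∀ i : Fin r,
      D i = if h : (i : ℕ) + 1 < r then maxClique n ⟨(i : ℕ) + 1, by omega⟩
        else (maxClique n ⟨r, by omega⟩) \
          ((Finset.univ.filter fun j : Fin (n + 1) => r ≤ (j : ℕ)).image Sum.inl)) :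
    (∀ i, (Gamma n).IsClique (D i : Set (GammaVert n))) ∧
    Finset.univ.inf D = ∅ ∧
    (∑ i, (D i).card) = (r - 1) * (n + 1) + r ∧
    (∀ E : Fin r → Finset (GammaVert n),
      (∀ i, (Gamma n).IsClique (E i : Set (GammaVert n))) →
      Finset.univ.inf E = ∅ →
      (∑ i, (E i).card) ≤ (r - 1) * (n + 1) + r) := by
  obtain ⟨k, rfl⟩ : ∃ k, r = k + 1 := ⟨r - 1, by omega⟩
  have hk : k + 1 < n + 2 := by omega
  have hD_lt (i : Fin (k + 1)) (hi : (i : ℕ) < k) : D i = maxClique n ⟨i + 1, by omega⟩ := by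
    rw [hD, dif_pos (by omega)]
  have hD_last : D (Fin.last k) = maxClique n ⟨k + 1, hk⟩ \ leftVertsFrom n (k + 1) := by
    rw [hD, dif_neg (by simp)]
    rfl
  refine ⟨fun i => ?_, ?_, ?_, fun E hE hinf => ?_⟩
  · rw [hD i]
    split
    · exact maxClique_isClique _
    · exact (maxClique_isClique _).subset (coe_subset.2 sdiff_subset)
  · refine eq_empty_of_forall_notMem fun x hx => ?_
    have hxD (i) : x ∈ D i := mem_inf.1 hx i (mem_univ i)
    have hlast := hD_last ▸ hxD (Fin.last k)
    rcases x with j | j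
    · have hj := (inl_mem_maxClique_sdiff_leftVertsFrom hk).1 hlast
      have hjD := hD_lt ⟨j, by omega⟩ (show (j : ℕ) < k by omega) ▸ hxD ⟨j, by omega⟩
      exact inl_mem_maxClique.1 hjD rfl
    · have hj := (inr_mem_maxClique_sdiff_leftVertsFrom hk).1 hlast
      have h0D := hD_lt ⟨0, by omega⟩ (show 0 < k by omega) ▸ hxD ⟨0, by omega⟩
      have : (j : ℕ) + 1 = 0 + 1 := inr_mem_maxClique.1 h0D
      omega
  · rw [Fin.sum_univ_castSucc, hD_last, card_maxClique_sdiff_leftVertsFrom,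
      sum_congr rfl fun i _ => (hD_lt i.castSucc i.is_lt).symm ▸ card_maxClique _]
    simp
  · exact (SimpleGraph.sum_card_le_of_isClique_of_inf_eq_empty gamma_not_adj_inr_inr E hE
      hinf).trans_eq (by simp)
end
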